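/- Let p, q be relatively prime positive integers, {F_n} the (p,q)-Fibonacci sequence, and let h, a, d be positive integers. Set d_1 = F_a and d_i = F_{h·a + (i−1)·d} for i ≥ 2. If 2d divides a and d_3 does not belong to the semigroup ℕd_1 + ℕd_2, then d_4 does not belong to the semigroup ℕd_1 + ℕd_2 + ℕd_3. -/

import Mathlib

open MvPolynomial

/-- The `(p,q)`-Fibonacci sequence: `F 0 = 0`, `F 1 = 1`, `F (n+2) = p * F (n+1) + q * F n`. -/
def pqFib (p q : ℕ) : ℕ → ℕ
  | 0 => 0
  | 1 => 1
  | n + 2 => p * pqFib p q (n + 1) + q * pqFib p q n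

/-- The `(p,q)`-Lucas sequence: `L 0 = 2`, `L 1 = p`, `L (n+2) = p * L (n+1) + q * L n`. -/
def pqLucas (p q : ℕ) : ℕ → ℕ
  | 0 => 2
  | 1 => p
  | n + 2 => p * pqLucas p q (n + 1) + q * pqLucas p q n

/-- The toric ideal of the affine monomial curve `t ↦ (t^{d 0}, …, t^{d (n-1)})`:
the kernel of the `k`-algebra map `k[x_1,…,x_n] → k[t]`, `x_i ↦ t^{d i}`. -/
noncomputable def toricIdeal (k : Type*) [Field k] {n : ℕ} (d : Fin n → ℕ) :
    Ideal (MvPolynomial (Fin n) k) :=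
  RingHom.ker (MvPolynomial.aeval
    (fun i : Fin n => (Polynomial.X : Polynomial k) ^ d i)).toRingHom

/-- The toric ideal `I_A` is a complete intersection iff it can be generated by
`n - 1` elements. -/
def IsCI (k : Type*) [Field k] {n : ℕ} (d : Fin n → ℕ) : Prop :=
  ∃ g : Fin (n - 1) → MvPolynomial (Fin n) k,
    Ideal.span (Set.range g) = toricIdeal k d

/-- The toric ideal of the projective monomial curve: the kernel of the `k`-algebra map
`k[x_1,…,x_{n+1}] → k[t,u]`, `x_i ↦ t^{d i} u^{D - d i}` for `i ≤ n` and
`x_{n+1} ↦ u^D`, where `D = max A`. -/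
noncomputable def projToricIdeal (k : Type*) [Field k] {n : ℕ} (d : Fin n → ℕ) :
    Ideal (MvPolynomial (Fin (n + 1)) k) :=
  RingHom.ker (MvPolynomial.aeval (fun i : Fin (n + 1) =>
    if h : (i : ℕ) < n then
      (X 0 : MvPolynomial (Fin 2) k) ^ d ⟨i, h⟩ *
        (X 1 : MvPolynomial (Fin 2) k) ^ (Finset.univ.sup d - d ⟨i, h⟩)
    else (X 1 : MvPolynomial (Fin 2) k) ^ (Finset.univ.sup d))).toRingHom

/-- The projective toric ideal `I_{A*}` is a complete intersection iff it can be
generated by `n - 1` elements. -/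
def ProjIsCI (k : Type*) [Field k] {n : ℕ} (d : Fin n → ℕ) : Prop :=
  ∃ g : Fin (n - 1) → MvPolynomial (Fin (n + 1)) k,
    Ideal.span (Set.range g) = projToricIdeal k d

/-- `d 0 < d 1 < ⋯` is a generalized arithmetic sequence: there are positive
integers `h, e` with `d i = h * d 0 + i * e` for every `i ≥ 1`. -/
def IsGenArith {n : ℕ} (d : Fin n → ℕ) : Prop :=
  ∃ h e : ℕ, 0 < h ∧ 0 < e ∧
    ∀ i : Fin n, 0 < (i : ℕ) → d i = h * d ⟨0, i.pos⟩ + (i : ℕ) * e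

/-- `d 0 < d 1 < ⋯` is an increasing arithmetic sequence: there is a positive
integer `e` with `d i = d 0 + i * e` for every `i`. -/
def IsArithFn {n : ℕ} (d : Fin n → ℕ) : Prop :=
  ∃ e : ℕ, 0 < e ∧ ∀ i : Fin n, 0 < (i : ℕ) → d i = d ⟨0, i.pos⟩ + (i : ℕ) * e

/-- `A = {d 0, …, d (n-1)}` minimally generates the numerical semigroup
`ℕ d 0 + ⋯ + ℕ d (n-1)`: no `d i` lies in the subsemigroup generated by the rest. -/
def MinimallyGenerates {n : ℕ} (d : Fin n → ℕ) : Prop :=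
  ∀ i : Fin n, ¬ ∃ α : Fin n → ℕ, α i = 0 ∧ d i = ∑ j, α j * d j

/-!
Write `F`, `L` for the `(p,q)`-Fibonacci and Lucas sequences and `n = h a`. The identity
`F (m + 2d) + (-q)^d F m = L d * F (m + d)` shows that `d₃ = L d * d₂ + q^d (F n / F a) d₁` when
`d` is odd, and `d₁ ∣ d₃` when `a = 2d`; so `d` is even and `4d ≤ a`, and then
`d₃ + q^d F n = L d * d₂` and `d₄ + q^d d₂ = L d * d₃`. From `d₄ = α d₁ + β d₂ + γ d₃` we get
`c d₃ = α d₁ + (β + q^d) d₂` with `c = L d - γ`. Strong divisibility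
`gcd (F m) (F m') = F (gcd m m')` and `F (2d) = L d * F d` force `L d ∣ β + q^d`; substituting
`L d * d₂` back gives `t d₃ = s d₁` with `0 < t ≤ L d`. But then `F a ∣ t F (2d)`, so
`t ≥ F (4d) / F (2d) = L (2d) > L d`.
-/

section PQFibonacci

variable {p q : ℕ}

theorem pqFib_add_two (n : ℕ) :
    pqFib p q (n + 2) = p * pqFib p q (n + 1) + q * pqFib p q n := rfl

theorem pqLucas_add_two (n : ℕ) :
    pqLucas p q (n + 2) = p * pqLucas p q (n + 1) + q * pqLucas p q n := rfl

theorem pqFib_pos (hp : 0 < p) : ∀ {n : ℕ}, 0 < n → 0 < pqFib p q n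
  | 1, _ => Nat.one_pos
  | n + 2, _ => Nat.lt_add_right _ (Nat.mul_pos hp (pqFib_pos hp n.succ_pos))

theorem pqFib_mono (hp : 0 < p) : Monotone (pqFib p q) := by
  refine monotone_nat_of_le_succ fun n => ?_
  cases n with
  | zero => exact Nat.zero_le _
  | succ n => exact (Nat.le_mul_of_pos_left _ hp).trans (Nat.le_add_right _ _)

theorem pqLucas_pos (hp : 0 < p) : ∀ n, 0 < pqLucas p q n
  | 0 => Nat.two_pos
  | 1 => hp
  | n + 2 => Nat.lt_add_right _ (Nat.mul_pos hp (pqLucas_pos hp (n + 1)))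

theorem pqLucas_lt_pqLucas (hp : 0 < p) (hq : 0 < q) {m n : ℕ} (hm : 0 < m) (hmn : m < n) :
    pqLucas p q m < pqLucas p q n := by
  have hmono : StrictMono fun k => pqLucas p q (k + 1) := strictMono_nat_of_lt_succ fun k =>
    lt_add_of_le_of_pos (Nat.le_mul_of_pos_left _ hp) (Nat.mul_pos hq (pqLucas_pos hp k))
  obtain ⟨m, rfl⟩ : ∃ m', m = m' + 1 := ⟨m - 1, by omega⟩
  obtain ⟨n, rfl⟩ : ∃ n', n = n' + 1 := ⟨n - 1, by omega⟩
  exact hmono (by omega)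

theorem pqFib_add (m n : ℕ) :
    pqFib p q (m + n + 1) =
      pqFib p q (m + 1) * pqFib p q (n + 1) + q * pqFib p q m * pqFib p q n := by
  induction m using Nat.twoStepInduction generalizing n with
  | zero => simp [pqFib]
  | one =>
    rw [show 1 + n + 1 = n + 2 by ring, pqFib_add_two]
    simp [pqFib]
  | more m ih1 ih2 =>
    rw [show m + 2 + n + 1 = (m + n + 1) + 2 by ring, pqFib_add_two, ih1,
      show m + n + 1 + 1 = (m + 1) + n + 1 by ring, ih2, pqFib_add_two (m + 1), pqFib_add_two m]
    ring

theorem pqFib_dvd {m n : ℕ} (hmn : m ∣ n) : pqFib p q m ∣ pqFib p q n := by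
  obtain ⟨k, rfl⟩ := hmn
  induction k with
  | zero => exact dvd_zero _
  | succ k ih =>
    rcases Nat.eq_zero_or_pos m with rfl | hm
    · simp
    · rw [Nat.mul_succ, show m * k + m = m * k + (m - 1) + 1 by omega, pqFib_add,
        Nat.sub_add_cancel hm]
      exact dvd_add (dvd_mul_left _ _) ((ih.mul_left q).mul_right _)

theorem pqFib_coprime_q (hpq : p.Coprime q) (n : ℕ) : (pqFib p q (n + 1)).Coprime q := by
  induction n using Nat.twoStepInduction with
  | zero => exact Nat.coprime_one_left q
  | one => simpa [pqFib] using hpq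
  | more n _ ih =>
    rw [pqFib_add_two]
    exact (Nat.coprime_add_mul_left_left _ _ _).mpr (hpq.mul_left ih)

theorem pqFib_coprime_pqFib_succ (hpq : p.Coprime q) (n : ℕ) :
    (pqFib p q n).Coprime (pqFib p q (n + 1)) := by
  induction n with
  | zero => simp [pqFib]
  | succ n ih =>
    rw [pqFib_add_two, add_comm (p * _), mul_comm p]
    exact (Nat.coprime_add_mul_left_right _ _ _).mpr ((pqFib_coprime_q hpq n).mul_right ih.symm)

theorem pqFib_gcd_add_self (hpq : p.Coprime q) (m n : ℕ) :
    (pqFib p q m).gcd (pqFib p q (n + m)) = (pqFib p q m).gcd (pqFib p q n) := by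
  cases m with
  | zero => simp [pqFib]
  | succ m =>
    rw [← add_assoc, pqFib_add, add_comm (_ * _), Nat.gcd_add_mul_right_right,
      mul_right_comm, mul_comm]
    exact Nat.Coprime.gcd_mul_right_cancel_right _
      ((pqFib_coprime_q hpq m).mul_right (pqFib_coprime_pqFib_succ hpq m).symm).symm

theorem pqFib_gcd (hpq : p.Coprime q) (m n : ℕ) :
    pqFib p q (m.gcd n) = (pqFib p q m).gcd (pqFib p q n) := by
  induction m, n using Nat.gcd.induction with
  | H0 n => simp [pqFib]
  | H1 m n _ ih =>
    have hgcd : ∀ k, (pqFib p q m).gcd (pqFib p q (n % m + k * m)) =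
        (pqFib p q m).gcd (pqFib p q (n % m)) := fun k => by
      induction k with
      | zero => simp
      | succ k ihk => rw [add_mul, one_mul, ← add_assoc, pqFib_gcd_add_self hpq, ihk]
    rw [← Nat.gcd_rec m n] at ih
    rw [ih, Nat.gcd_comm, ← hgcd (n / m), Nat.mod_add_div']

theorem pqFib_add_two_mul_int (d n : ℕ) :
    (pqFib p q (n + 2 * d) : ℤ) + (-(q : ℤ)) ^ d * pqFib p q n =
      pqLucas p q d * pqFib p q (n + d) := by
  induction d using Nat.twoStepInduction generalizing n with
  | zero => simp [pqLucas]; ring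
  | one => simp [pqLucas, pqFib_add_two]
  | more d ih1 ih2 =>
    have e1 := ih2 (n + 1)
    have e2 := ih1 (n + 2)
    have e3 : (pqFib p q (n + 2) : ℤ) = p * pqFib p q (n + 1) + q * pqFib p q n := by
      exact_mod_cast pqFib_add_two n
    rw [show n + 1 + 2 * (d + 1) = n + 2 * d + 3 by ring,
      show n + 1 + (d + 1) = n + d + 2 by ring] at e1
    rw [show n + 2 + 2 * d = n + 2 * d + 2 by ring, show n + 2 + d = n + d + 2 by ring] at e2
    rw [show n + 2 * (d + 2) = n + 2 * d + 2 + 2 by ring, show n + (d + 2) = n + d + 2 by ring,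
      pqFib_add_two, pqLucas_add_two]
    push_cast
    linear_combination (p : ℤ) * e1 + (q : ℤ) * e2 - (-(q : ℤ)) ^ d * q * e3

theorem pqFib_add_two_mul_of_even {d : ℕ} (hd : Even d) (n : ℕ) :
    pqFib p q (n + 2 * d) + q ^ d * pqFib p q n = pqLucas p q d * pqFib p q (n + d) := by
  have h := pqFib_add_two_mul_int (p := p) (q := q) d n
  rw [hd.neg_pow] at h
  exact_mod_cast h

theorem pqFib_add_two_mul_of_odd {d : ℕ} (hd : Odd d) (n : ℕ) :
    pqFib p q (n + 2 * d) = pqLucas p q d * pqFib p q (n + d) + q ^ d * pqFib p q n := by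
  have h := pqFib_add_two_mul_int (p := p) (q := q) d n
  rw [hd.neg_pow] at h
  exact_mod_cast (by linear_combination h :
    (pqFib p q (n + 2 * d) : ℤ) = pqLucas p q d * pqFib p q (n + d) + q ^ d * pqFib p q n)

theorem pqFib_two_mul (d : ℕ) : pqFib p q (2 * d) = pqLucas p q d * pqFib p q d := by
  have h := pqFib_add_two_mul_int (p := p) (q := q) d 0
  simp only [zero_add, pqFib, Nat.cast_zero, mul_zero, add_zero] at h
  exact_mod_cast h

theorem pqFib_dvd_mul_pqFib_gcd (hpq : p.Coprime q) {a b x : ℕ}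
    (h : pqFib p q a ∣ x * pqFib p q b) : pqFib p q a ∣ x * pqFib p q (a.gcd b) := by
  rw [pqFib_gcd hpq, ← Nat.gcd_mul_left]
  exact Nat.dvd_gcd (dvd_mul_left _ _) h

theorem pqLucas_dvd_of_pqFib_two_mul_dvd (hp : 0 < p) (hpq : p.Coprime q) {d n x : ℕ}
    (hd : 0 < d) (hn : 2 * d ∣ n) (h : pqFib p q (2 * d) ∣ x * pqFib p q (n + d)) :
    pqLucas p q d ∣ x := by
  obtain ⟨k, rfl⟩ := hn
  have hgcd : (2 * d).gcd (2 * d * k + d) = d := by simp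
  have hdvd := pqFib_dvd_mul_pqFib_gcd hpq h
  rw [hgcd, pqFib_two_mul] at hdvd
  exact Nat.dvd_of_mul_dvd_mul_right (pqFib_pos hp hd) hdvd

theorem pqLucas_two_mul_le_of_dvd (hp : 0 < p) (hpq : p.Coprime q) {a d n t : ℕ} (hd : 0 < d)
    (hda : 2 * d ∣ a) (ha : 4 * d ≤ a) (han : a ∣ n) (ht : 0 < t)
    (h : pqFib p q a ∣ t * pqFib p q (n + 2 * d)) : pqLucas p q (2 * d) ≤ t := by
  obtain ⟨k, rfl⟩ := han
  have hgcd : a.gcd (a * k + 2 * d) = 2 * d := by simpa using Nat.gcd_eq_right hda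
  have hF2d : 0 < pqFib p q (2 * d) := pqFib_pos hp (by omega)
  have hle : pqFib p q a ≤ t * pqFib p q (2 * d) :=
    Nat.le_of_dvd (Nat.mul_pos ht hF2d) (hgcd ▸ pqFib_dvd_mul_pqFib_gcd hpq h)
  have h4d : pqLucas p q (2 * d) * pqFib p q (2 * d) ≤ pqFib p q a := by
    rw [← pqFib_two_mul, ← mul_assoc]
    exact pqFib_mono hp (by omega)
  exact Nat.le_of_mul_le_mul_right (h4d.trans hle) hF2d

theorem not_exists_pqFib_add_three_mul_eq (hp : 0 < p) (hq : 0 < q) (hpq : p.Coprime q)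
    {a d n : ℕ} (hd : 0 < d) (hev : Even d) (hda : 2 * d ∣ a) (ha : 4 * d ≤ a) (han : a ∣ n)
    (hn : 0 < n) :
    ¬ ∃ α β γ : ℕ, pqFib p q (n + 3 * d) =
      α * pqFib p q a + β * pqFib p q (n + d) + γ * pqFib p q (n + 2 * d) := by
  rintro ⟨α, β, γ, hrep⟩
  set L := pqLucas p q d
  set d₁ := pqFib p q a
  set d₂ := pqFib p q (n + d)
  set d₃ := pqFib p q (n + 2 * d)
  obtain ⟨w, hw⟩ := pqFib_dvd (p := p) (q := q) han
  have hd₁ : 0 < d₁ := pqFib_pos hp (by omega)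
  have hd₂ : 0 < d₂ := pqFib_pos hp (by omega)
  have hd₃ : 0 < d₃ := pqFib_pos hp (by omega)
  have hw₀ : 0 < w := Nat.pos_of_mul_pos_left (hw ▸ pqFib_pos hp hn)
  have hqd : 0 < q ^ d := pow_pos hq d
  have hE₁ : d₃ + q ^ d * w * d₁ = L * d₂ := by
    rw [mul_assoc, mul_comm w, ← hw]
    exact pqFib_add_two_mul_of_even hev n
  have hE₂ : pqFib p q (n + 3 * d) + q ^ d * d₂ = L * d₃ := by
    have := pqFib_add_two_mul_of_even (p := p) (q := q) hev (n + d)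
    rwa [show n + d + 2 * d = n + 3 * d by ring, show n + d + d = n + 2 * d by ring] at this
  obtain ⟨c, hcL, hc⟩ : ∃ c ≤ L, c * d₃ = α * d₁ + (β + q ^ d) * d₂ := by
    have hγ : γ ≤ L := (Nat.lt_of_mul_lt_mul_right (a := d₃) (by nlinarith)).le
    obtain ⟨c, hc⟩ := Nat.exists_eq_add_of_le hγ
    refine ⟨c, by omega, ?_⟩
    nlinarith
  obtain ⟨b, hb⟩ : L ∣ β + q ^ d := by
    have h2d₁ : pqFib p q (2 * d) ∣ d₁ := pqFib_dvd hda
    have h2d₃ : pqFib p q (2 * d) ∣ d₃ := pqFib_dvd (Nat.dvd_add (hda.trans han) dvd_rfl)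
    refine pqLucas_dvd_of_pqFib_two_mul_dvd hp hpq hd (hda.trans han) ?_
    exact (Nat.dvd_add_right (h2d₁.mul_left α)).mp (hc ▸ h2d₃.mul_left c)
  have hcb : c * d₃ = b * d₃ + (α + b * q ^ d * w) * d₁ := by
    calc c * d₃ = α * d₁ + b * (L * d₂) := by rw [hc, hb]; ring
      _ = _ := by rw [← hE₁]; ring
  obtain ⟨t, rfl⟩ : ∃ t, c = b + t := Nat.exists_eq_add_of_le
    (Nat.le_of_mul_le_mul_right (hcb ▸ Nat.le_add_right _ _) hd₃)
  have ht : t * d₃ = (α + b * q ^ d * w) * d₁ := by linarith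
  have hb₀ : 0 < b := Nat.pos_of_ne_zero (by rintro rfl; omega)
  have ht₀ : 0 < t := Nat.pos_of_mul_pos_right
    (ht ▸ Nat.mul_pos (Nat.add_pos_right α (by positivity)) hd₁)
  have hLt := pqLucas_two_mul_le_of_dvd hp hpq hd hda ha han ht₀ ⟨_, ht.trans (mul_comm _ _)⟩
  have hLL := pqLucas_lt_pqLucas hp hq hd (by omega : d < 2 * d)
  omega

end PQFibonacci

/-- With `d₁ = F_a`, `d_i = F_{h·a + (i−1)·d}` for `i ≥ 2` in the
`(p,q)`-Fibonacci sequence, if `2d ∣ a` and `d₃ ∉ ℕd₁ + ℕd₂`, then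
`d₄ ∉ ℕd₁ + ℕd₂ + ℕd₃`. -/
theorem stmt15 (p q : ℕ) (hp : 0 < p) (hq : 0 < q) (hpq : Nat.gcd p q = 1)
    (h a d : ℕ) (hh : 0 < h) (ha : 0 < a) (hd : 0 < d)
    (D : ℕ → ℕ) (hD1 : D 1 = pqFib p q a)
    (hDi : ∀ i, 2 ≤ i → D i = pqFib p q (h * a + (i - 1) * d))
    (hdiv : 2 * d ∣ a)
    (hd3 : ¬ ∃ α β : ℕ, D 3 = α * D 1 + β * D 2) :
    ¬ ∃ α β γ : ℕ, D 4 = α * D 1 + β * D 2 + γ * D 3 := by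
  have hD2 : D 2 = pqFib p q (h * a + d) := by simpa using hDi 2 le_rfl
  have hD3 : D 3 = pqFib p q (h * a + 2 * d) := by simpa using hDi 3 (by norm_num)
  have hD4 : D 4 = pqFib p q (h * a + 3 * d) := by simpa using hDi 4 (by norm_num)
  rw [hD1, hD2, hD3] at hd3
  rw [hD1, hD2, hD3, hD4]
  have han : a ∣ h * a := dvd_mul_left a h
  rcases Nat.even_or_odd d with hev | hodd
  · have ha' : a = 2 * d ∨ 4 * d ≤ a := by
      obtain ⟨k, rfl⟩ := hdiv
      rcases Nat.lt_or_ge k 2 with hk | hk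
      · interval_cases k <;> simp_all
      · exact Or.inr (by nlinarith)
    rcases ha' with rfl | ha₄
    · obtain ⟨c, hc⟩ := pqFib_dvd (p := p) (q := q) (Nat.dvd_add han dvd_rfl)
      exact absurd ⟨c, 0, by rw [hc]; ring⟩ hd3
    · exact not_exists_pqFib_add_three_mul_eq hp hq hpq hd hev hdiv ha₄ han (by positivity)
  · obtain ⟨w, hw⟩ := pqFib_dvd (p := p) (q := q) han
    exact absurd ⟨q ^ d * w, pqLucas p q d, by rw [pqFib_add_two_mul_of_odd hodd, hw]; ring⟩ hd3
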